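/- arXiv:math/0507267 — 2 statements merged into one kernel-verified Lean document; each statement's English description precedes it below -/
import Mathlib

section
/- Let {(A_n, E_n)} be a stationary ergodic sequence of p×p random matrices and p-dimensional random vectors such that E max(log‖A_1‖, 0) < ∞, the top Lyapunov exponent λ = lim_{n→∞} (1/n) log‖A_0 A_{−1} ⋯ A_{−n+1}‖ is strictly negative, and E max(log‖E_1‖, 0) < ∞. Then for every n the random series W_n = E_n + Σ_{i=0}^∞ A_n A_{n−1} ⋯ A_{n−i} E_{n−i−1} converges absolutely almost surely. -/
open MeasureTheory Filter

attribute [local instance] Matrix.linftyOpNormedRing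

instance matrixMeasurableSpace {m n : Type*} : MeasurableSpace (Matrix m n ℝ) :=
  inferInstanceAs (MeasurableSpace (m → n → ℝ))

/-- Backward product `A_n A_{n-1} ⋯ A_{n-i}` of random matrices. -/
def prodDown {Ω : Type*} {p : ℕ} (A : ℤ → Ω → Matrix (Fin p) (Fin p) ℝ) (n : ℤ) :
    ℕ → Ω → Matrix (Fin p) (Fin p) ℝ
  | 0 => A n
  | i + 1 => fun ω => prodDown A n i ω * A (n - (i + 1)) ω

namespace Stmt2Aux

instance matBorel {m n : Type*} [Countable m] [Countable n] :
    BorelSpace (Matrix m n ℝ) :=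
  inferInstanceAs (BorelSpace (m → n → ℝ))

variable {p : ℕ}

/-- the path space -/
abbrev S (p : ℕ) := ℤ → Matrix (Fin p) (Fin p) ℝ × (Fin p → ℝ)

/-- backward product read from a path, based at time `0` -/
def bprod (s : S p) : ℕ → Matrix (Fin p) (Fin p) ℝ
  | 0 => (s 0).1
  | i + 1 => bprod s i * (s (-(i + 1 : ℕ))).1

lemma measurable_matmul {α : Type*} [MeasurableSpace α]
    {f g : α → Matrix (Fin p) (Fin p) ℝ} (hf : Measurable f) (hg : Measurable g) :
    Measurable fun a => f a * g a := by
  apply measurable_pi_lambda; intro i; apply measurable_pi_lambda; intro j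
  simp only [Matrix.mul_apply]
  exact Finset.measurable_sum _ fun k _ =>
    ((measurable_pi_apply k).comp ((measurable_pi_apply i).comp hf)).mul
      ((measurable_pi_apply j).comp ((measurable_pi_apply k).comp hg))

lemma measurable_bprod (i : ℕ) : Measurable fun s : S p => bprod s i := by
  induction i with
  | zero => exact measurable_fst.comp (measurable_pi_apply 0)
  | succ i ih =>
      exact measurable_matmul ih (measurable_fst.comp (measurable_pi_apply _))

/-- good event, part 1: Lyapunov behaviour of the backward products -/
def G1 (p : ℕ) (lam : ℝ) : Set (S p) :=
  {s | Tendsto (fun i : ℕ => Real.log ‖bprod s i‖ / (i + 1)) atTop (nhds lam)}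

/-- good event, part 2: subexponential growth of the noise -/
def G2 (p : ℕ) : Set (S p) :=
  {s | Tendsto (fun i : ℕ => max (Real.log ‖(s (-(i + 1 : ℕ))).2‖) 0 / (i + 1))
      atTop (nhds 0)}

lemma measurableSet_G1 (lam : ℝ) : MeasurableSet (G1 p lam) :=
  measurableSet_tendsto _ fun i => by
    haveI : @OpensMeasurableSpace (Matrix (Fin p) (Fin p) ℝ)
        (@UniformSpace.toTopologicalSpace _ (@PseudoMetricSpace.toUniformSpace _
          (@SeminormedAddCommGroup.toPseudoMetricSpace _
            (@NormedAddCommGroup.toSeminormedAddCommGroup _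
              (@NonUnitalNormedRing.toNormedAddCommGroup _
                (@NormedRing.toNonUnitalNormedRing _ Matrix.linftyOpNormedRing)))))) _ :=
      @BorelSpace.opensMeasurable _ _ _ (inferInstanceAs (BorelSpace (Fin p → Fin p → ℝ)))
    exact (Real.measurable_log.comp (measurable_norm.comp (measurable_bprod i))).div_const _

lemma measurableSet_G2 : MeasurableSet (G2 p) :=
  measurableSet_tendsto _ fun i =>
    ((Real.measurable_log.comp
        (measurable_norm.comp (measurable_snd.comp (measurable_pi_apply _)))).max
      measurable_const).div_const _

/-- the deterministic summability argument -/
lemma summable_aux (P : ℕ → Matrix (Fin p) (Fin p) ℝ) (e : ℕ → Fin p → ℝ) {lam : ℝ}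
    (hneg : lam < 0)
    (hP : Tendsto (fun i : ℕ => Real.log ‖P i‖ / (i + 1)) atTop (nhds lam))
    (hE : Tendsto (fun i : ℕ => max (Real.log ‖e i‖) 0 / (i + 1)) atTop (nhds 0)) :
    Summable fun i : ℕ => ‖(P i).mulVec (e i)‖ := by
  set r := Real.exp (lam / 4) with hrdef
  have hr0 : 0 < r := Real.exp_pos _
  have hr1 : r < 1 := by
    rw [hrdef]
    exact Real.exp_lt_one_iff.2 (by linarith)
  have hg : Summable fun i : ℕ => r ^ (i + 1) := by
    simpa [pow_succ] using (summable_geometric_of_lt_one hr0.le hr1).mul_right r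
  refine summable_of_isBigO_nat hg ?_
  rw [Asymptotics.isBigO_iff]
  refine ⟨1, ?_⟩
  filter_upwards [hP.eventually_lt_const (show lam < lam / 2 by linarith),
    hE.eventually_lt_const (show (0 : ℝ) < -lam / 4 by linarith)] with i h1 h2
  have hi : (0 : ℝ) < (i : ℝ) + 1 := by positivity
  have hP' : ‖P i‖ ≤ Real.exp (lam / 2 * ((i : ℝ) + 1)) := by
    have hlog : Real.log ‖P i‖ ≤ lam / 2 * ((i : ℝ) + 1) := by
      rw [div_lt_iff₀ hi] at h1; linarith
    rcases eq_or_lt_of_le (norm_nonneg (P i)) with h0 | h0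
    · rw [← h0]; exact (Real.exp_pos _).le
    · calc ‖P i‖ = Real.exp (Real.log ‖P i‖) := (Real.exp_log h0).symm
        _ ≤ _ := Real.exp_le_exp.2 hlog
  have he' : ‖e i‖ ≤ Real.exp (-lam / 4 * ((i : ℝ) + 1)) := by
    have hlog : Real.log ‖e i‖ ≤ -lam / 4 * ((i : ℝ) + 1) := by
      rw [div_lt_iff₀ hi] at h2
      exact le_trans (le_max_left (Real.log ‖e i‖) 0) h2.le
    rcases eq_or_lt_of_le (norm_nonneg (e i)) with h0 | h0
    · rw [← h0]; exact (Real.exp_pos _).le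
    · calc ‖e i‖ = Real.exp (Real.log ‖e i‖) := (Real.exp_log h0).symm
        _ ≤ _ := Real.exp_le_exp.2 hlog
  have hbound : ‖(P i).mulVec (e i)‖ ≤ r ^ (i + 1) := by
    calc ‖(P i).mulVec (e i)‖ ≤ ‖P i‖ * ‖e i‖ := Matrix.linfty_opNorm_mulVec _ _
      _ ≤ Real.exp (lam / 2 * ((i : ℝ) + 1)) * Real.exp (-lam / 4 * ((i : ℝ) + 1)) :=
          mul_le_mul hP' he' (norm_nonneg _) (Real.exp_pos _).le
      _ = Real.exp (lam / 4 * ((i : ℝ) + 1)) := by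
          rw [← Real.exp_add]; ring_nf
      _ = r ^ (i + 1) := by
          rw [hrdef, ← Real.exp_nat_mul]
          congr 1
          push_cast
          ring
  rw [Real.norm_of_nonneg (norm_nonneg _), one_mul,
    Real.norm_of_nonneg (pow_nonneg hr0.le _)]
  exact hbound

end Stmt2Aux

open Stmt2Aux

/-- Lemma 1 / Brandt: if `{(A_n, E_n)}` is a stationary (ergodic)
sequence of `p×p` random matrices and `p`-vectors with
`E max(log‖A₁‖, 0) < ∞`, strictly negative top Lyapunov exponent
`λ = lim (1/n) log‖A₀A₋₁⋯A₋ₙ₊₁‖ < 0` (a.s. constant, by ergodicity), and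
`E max(log‖E₁‖, 0) < ∞`, then for every `n` the series
`W_n = E_n + Σ_{i=0}^∞ A_n ⋯ A_{n−i} E_{n−i−1}` converges absolutely a.s. -/
theorem stmt2 {Ω : Type*} [MeasurableSpace Ω] (μ : Measure Ω) [IsProbabilityMeasure μ]
    {p : ℕ} (A : ℤ → Ω → Matrix (Fin p) (Fin p) ℝ) (E : ℤ → Ω → (Fin p → ℝ))
    (hmeasA : ∀ n, Measurable (A n)) (hmeasE : ∀ n, Measurable (E n))
    -- joint stationarity of the super-process {(A_n, E_n)}
    (hstat : Measure.map (fun ω => fun k : ℤ => (A (k + 1) ω, E (k + 1) ω)) μ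
           = Measure.map (fun ω => fun k : ℤ => (A k ω, E k ω)) μ)
    -- integrability of the positive parts of the logs
    (hlogA : Integrable (fun ω => max (Real.log ‖A 1 ω‖) 0) μ)
    (hlogE : Integrable (fun ω => max (Real.log ‖E 1 ω‖) 0) μ)
    -- the top Lyapunov exponent is an a.s. constant (ergodicity) and negative
    (lam : ℝ) (hneg : lam < 0)
    (hlam : ∀ᵐ ω ∂μ,
      Tendsto (fun i : ℕ => Real.log ‖prodDown A 0 i ω‖ / (i + 1)) atTop (nhds lam)) :
    ∀ n : ℤ, ∀ᵐ ω ∂μ,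
      Summable (fun i : ℕ => ‖(prodDown A n i ω).mulVec (E (n - (i + 1)) ω)‖) := by
  classical
  let Y : ℤ → Ω → S p := fun n ω k => (A (k + n) ω, E (k + n) ω)
  let X : Ω → S p := fun ω k => (A k ω, E k ω)
  have measX : Measurable X :=
    measurable_pi_lambda _ fun k => (hmeasA k).prodMk (hmeasE k)
  have measY : ∀ n, Measurable (Y n) := fun n =>
    measurable_pi_lambda _ fun k => (hmeasA _).prodMk (hmeasE _)
  let T : ℤ → S p → S p := fun n s k => s (k + n)
  have measT : ∀ n, Measurable (T n) := fun n =>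
    measurable_pi_lambda _ fun k => measurable_pi_apply _
  have hstat' : Measure.map (Y 1) μ = Measure.map X μ := hstat
  have key : ∀ n : ℤ, Measure.map (Y (n + 1)) μ = Measure.map (Y n) μ := by
    intro n
    have e1 : Y (n + 1) = T n ∘ Y 1 := by
      funext ω k
      show (A (k + (n + 1)) ω, E (k + (n + 1)) ω) = (A (k + n + 1) ω, E (k + n + 1) ω)
      rw [show k + (n + 1) = k + n + 1 by ring]
    have e2 : Y n = T n ∘ X := rfl
    rw [e1, e2, ← Measure.map_map (measT n) (measY 1), ← Measure.map_map (measT n) measX,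
      hstat']
  have lawY : ∀ n : ℤ, Measure.map (Y n) μ = Measure.map X μ := by
    intro n
    induction n using Int.induction_on with
    | zero =>
        congr 1
        funext ω k
        show (A (k + 0) ω, E (k + 0) ω) = (A k ω, E k ω)
        rw [add_zero]
    | succ n ih => rw [key n, ih]
    | pred n ih =>
        have h := key (-(n : ℤ) - 1)
        rw [show -(n : ℤ) - 1 + 1 = -(n : ℤ) by ring] at h
        rw [← h]
        exact ih
  -- law of a single noise coordinate
  have lawE : ∀ m : ℤ, Measure.map (E m) μ = Measure.map (E 1) μ := by
    intro m
    have meas_proj : Measurable fun s : S p => (s 1).2 :=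
      measurable_snd.comp (measurable_pi_apply 1)
    have h1 : (fun s : S p => (s 1).2) ∘ Y (m - 1) = E m := by
      funext ω
      show E (1 + (m - 1)) ω = E m ω
      rw [show 1 + (m - 1) = m by ring]
    calc Measure.map (E m) μ
        = Measure.map ((fun s : S p => (s 1).2) ∘ Y (m - 1)) μ := by rw [h1]
      _ = Measure.map (fun s : S p => (s 1).2) (Measure.map (Y (m - 1)) μ) :=
          (Measure.map_map meas_proj (measY _)).symm
      _ = Measure.map (fun s : S p => (s 1).2) (Measure.map X μ) := by rw [lawY]
      _ = Measure.map (E 1) μ := Measure.map_map meas_proj measX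
  -- Borel–Cantelli for the noise
  have hBC : ∀ᵐ ω ∂μ,
      Tendsto (fun i : ℕ => max (Real.log ‖E (-(i + 1 : ℕ)) ω‖) 0 / (i + 1))
        atTop (nhds 0) := by
    have hmain : ∀ m : ℕ, ∀ᵐ ω ∂μ, ∀ᶠ i : ℕ in atTop,
        max (Real.log ‖E (-(i + 1 : ℕ)) ω‖) 0 ≤ ((i : ℝ) + 1) / ((m : ℝ) + 1) := by
      intro m
      set c : ℝ := (m : ℝ) + 1 with hc
      have hcpos : 0 < c := by positivity
      set Z : Ω → ℝ := fun ω => c * max (Real.log ‖E 1 ω‖) 0 with hZ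
      have hZint : Integrable Z μ := hlogE.const_mul c
      have hZnn : 0 ≤ Z := fun ω => mul_nonneg hcpos.le (le_max_right _ _)
      have htsum : (∑' j : ℕ, μ {ω | Z ω ∈ Set.Ioi (j : ℝ)}) < ⊤ := by
        letI : MeasureSpace Ω := ⟨μ⟩
        haveI : IsProbabilityMeasure (volume : Measure Ω) :=
          inferInstanceAs (IsProbabilityMeasure μ)
        exact ProbabilityTheory.tsum_prob_mem_Ioi_lt_top hZint hZnn
      set s : ℕ → Set Ω := fun i =>
        {ω | ((i : ℝ) + 1) / c < max (Real.log ‖E (-(i + 1 : ℕ)) ω‖) 0} with hs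
      have hms : ∀ i : ℕ, μ (s i) = μ {ω | Z ω ∈ Set.Ioi ((i + 1 : ℕ) : ℝ)} := by
        intro i
        have htset : MeasurableSet {v : Fin p → ℝ | ((i : ℝ) + 1) / c < max (Real.log ‖v‖) 0} :=
          measurableSet_lt measurable_const
            ((Real.measurable_log.comp measurable_norm).max measurable_const)
        have h1 : s i = E (-(i + 1 : ℕ)) ⁻¹'
            {v : Fin p → ℝ | ((i : ℝ) + 1) / c < max (Real.log ‖v‖) 0} := rfl
        have h2 : {ω | Z ω ∈ Set.Ioi ((i + 1 : ℕ) : ℝ)} = E 1 ⁻¹'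
            {v : Fin p → ℝ | ((i : ℝ) + 1) / c < max (Real.log ‖v‖) 0} := by
          ext ω
          simp only [Set.mem_setOf_eq, Set.mem_Ioi, Set.mem_preimage, hZ]
          rw [div_lt_iff₀ hcpos]
          push_cast
          constructor <;> intro h <;> linarith [mul_comm c (max (Real.log ‖E 1 ω‖) 0)]
        rw [h1, h2, ← Measure.map_apply (hmeasE _) htset, ← Measure.map_apply (hmeasE _) htset,
          lawE]
      have hsum : (∑' i : ℕ, μ (s i)) ≠ ⊤ := by
        have hle : (∑' i : ℕ, μ (s i)) ≤ ∑' j : ℕ, μ {ω | Z ω ∈ Set.Ioi (j : ℝ)} := by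
          calc (∑' i : ℕ, μ (s i))
              = ∑' i : ℕ, μ {ω | Z ω ∈ Set.Ioi ((i + 1 : ℕ) : ℝ)} := by
                exact tsum_congr hms
            _ ≤ ∑' j : ℕ, μ {ω | Z ω ∈ Set.Ioi (j : ℝ)} :=
                ENNReal.tsum_comp_le_tsum_of_injective (f := fun i : ℕ => i + 1)
                  (add_left_injective 1) fun j : ℕ => μ {ω | Z ω ∈ Set.Ioi (j : ℝ)}
        exact (hle.trans_lt htsum).ne
      filter_upwards [ae_eventually_notMem hsum] with ω hω
      filter_upwards [hω] with i hi
      have : ¬ ((i : ℝ) + 1) / c < max (Real.log ‖E (-(i + 1 : ℕ)) ω‖) 0 := hi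
      rw [not_lt] at this
      exact this
    filter_upwards [ae_all_iff.2 hmain] with ω hω
    rw [NormedAddCommGroup.tendsto_nhds_zero]
    intro ε hε
    obtain ⟨m, hm⟩ := exists_nat_one_div_lt hε
    filter_upwards [hω m] with i hi
    have hnn : 0 ≤ max (Real.log ‖E (-(i + 1 : ℕ)) ω‖) 0 / ((i : ℝ) + 1) :=
      div_nonneg (le_max_right _ _) (by positivity)
    rw [Real.norm_of_nonneg hnn]
    have hipos : (0 : ℝ) < (i : ℝ) + 1 := by positivity
    have hmpos : (0 : ℝ) < (m : ℝ) + 1 := by positivity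
    have h1 : max (Real.log ‖E (-(i + 1 : ℕ)) ω‖) 0 / ((i : ℝ) + 1)
        ≤ (((i : ℝ) + 1) / ((m : ℝ) + 1)) / ((i : ℝ) + 1) :=
      div_le_div_of_nonneg_right hi hipos.le
    have h2 : (((i : ℝ) + 1) / ((m : ℝ) + 1)) / ((i : ℝ) + 1) = 1 / ((m : ℝ) + 1) := by
      field_simp
    calc max (Real.log ‖E (-(i + 1 : ℕ)) ω‖) 0 / ((i : ℝ) + 1)
        ≤ 1 / ((m : ℝ) + 1) := h2 ▸ h1
      _ < ε := hm
  -- almost surely `X` lies in the good event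
  set G : Set (S p) := G1 p lam ∩ G2 p with hGdef
  have hGmeas : MeasurableSet G := (measurableSet_G1 lam).inter measurableSet_G2
  have hXG : ∀ᵐ ω ∂μ, X ω ∈ G := by
    filter_upwards [hlam, hBC] with ω h1 h2
    constructor
    · show Tendsto (fun i : ℕ => Real.log ‖bprod (X ω) i‖ / (i + 1)) atTop (nhds lam)
      have hpp : ∀ i, bprod (X ω) i = prodDown A 0 i ω := by
        intro i
        induction i with
        | zero => rfl
        | succ i ih =>
            have hidx : (-(i + 1 : ℕ) : ℤ) = 0 - ((i : ℤ) + 1) := by push_cast; ring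
            show bprod (X ω) i * (X ω (-(i + 1 : ℕ))).1
                = prodDown A 0 i ω * A (0 - ((i : ℤ) + 1)) ω
            rw [ih, hidx]
      simp only [hpp]
      exact h1
    · exact h2
  have hX1 : Measure.map X μ G = 1 := by
    rw [Measure.map_apply measX hGmeas]
    have : μ (X ⁻¹' G)ᶜ = 0 := by
      rw [ae_iff] at hXG
      exact hXG
    exact (prob_compl_eq_zero_iff (measX hGmeas)).1 this
  intro n
  have hYG : ∀ᵐ ω ∂μ, Y n ω ∈ G := by
    have h1 : μ (Y n ⁻¹' G) = 1 := by
      rw [← Measure.map_apply (measY n) hGmeas, lawY n, hX1]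
    rw [ae_iff]
    exact (prob_compl_eq_zero_iff ((measY n) hGmeas)).2 h1
  filter_upwards [hYG] with ω hω
  obtain ⟨h1, h2⟩ := hω
  have hpp : ∀ i, bprod (Y n ω) i = prodDown A n i ω := by
    intro i
    induction i with
    | zero =>
        show A (0 + n) ω = A n ω
        rw [zero_add]
    | succ i ih =>
        have hidx : (-(i + 1 : ℕ) : ℤ) + n = n - ((i : ℤ) + 1) := by push_cast; ring
        show bprod (Y n ω) i * A ((-(i + 1 : ℕ) : ℤ) + n) ω
            = prodDown A n i ω * A (n - ((i : ℤ) + 1)) ω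
        rw [ih, hidx]
  have h1' : Tendsto (fun i : ℕ => Real.log ‖prodDown A n i ω‖ / (i + 1)) atTop (nhds lam) := by
    have := h1
    simp only [G1, Set.mem_setOf_eq, hpp] at this
    exact this
  have h2' : Tendsto (fun i : ℕ => max (Real.log ‖E (n - ((i : ℤ) + 1)) ω‖) 0 / (i + 1))
      atTop (nhds 0) := by
    have heq : (fun i : ℕ => max (Real.log ‖(Y n ω (-(i + 1 : ℕ))).2‖) 0 / ((i : ℝ) + 1))
        = fun i : ℕ => max (Real.log ‖E (n - ((i : ℤ) + 1)) ω‖) 0 / ((i : ℝ) + 1) := by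
      funext i
      have : (-(i + 1 : ℕ) : ℤ) + n = n - ((i : ℤ) + 1) := by push_cast; ring
      show max (Real.log ‖E ((-(i + 1 : ℕ) : ℤ) + n) ω‖) 0 / ((i : ℝ) + 1) = _
      rw [this]
    have := h2
    simp only [G2, Set.mem_setOf_eq] at this
    rw [heq] at this
    exact this
  exact summable_aux _ _ hneg h1' h2'
end

section
/- Let B_1 = [[δ_1, 0], [0, 0]] and B_2 = [[b_1, −c b_1], [b_2, −c b_2]] be 2×2 real matrices, so that the eigenvalues of B_2 are 0 and δ_2 = b_1 − c b_2. With the choice b_1 = 100, c = 10, b_2 = 9.99, δ_1 = 0.1, p_{12} = p_{21} = 0.8, the quantity λ = (p_{21}/(p_{21}+p_{12})) log|δ_1| + (p_{12}/(p_{12}+p_{21})) log|b_1 − c b_2| + (p_{12} p_{21}/(p_{12}+p_{21})) log|b_1/(b_1 − c b_2)| is strictly positive, even though |δ_1| < 1 and |δ_2| < 1 (both matrices are individually stable). -/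
theorem Matrix.charpoly_rankOne_fin_two {R : Type*} [CommRing R] [Nontrivial R] (a b c : R) :
    (Matrix.of ![![a, -(c * a)], ![b, -(c * b)]]).charpoly
      = Polynomial.X ^ 2 - Polynomial.C (a - c * b) * Polynomial.X := by
  rw [Matrix.charpoly_fin_two, Matrix.trace_fin_two, Matrix.det_fin_two]
  simp only [Matrix.of_apply, Matrix.cons_val_zero, Matrix.cons_val_one, Matrix.cons_val_fin_one]
  rw [show a * -(c * b) - -(c * a) * b = 0 by ring, show a + -(c * b) = a - c * b by ring,
    Polynomial.C_0, add_zero]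

/-- With B₁ = [[δ₁,0],[0,0]] and B₂ = [[b₁,−c b₁],[b₂,−c b₂]]
(whose eigenvalues are 0 and δ₂ = b₁ − c b₂), and the numerical choice
b₁ = 100, c = 10, b₂ = 9.99, δ₁ = 0.1, p₁₂ = p₂₁ = 0.8, the Lyapunov exponent
given by Pincus's formula is strictly positive although |δ₁| < 1 and |δ₂| < 1. -/
theorem stmt11 :
    let δ1 : ℝ := 0.1
    let b1 : ℝ := 100
    let c : ℝ := 10
    let b2 : ℝ := 9.99
    let p12 : ℝ := 0.8
    let p21 : ℝ := 0.8
    let δ2 : ℝ := b1 - c * b2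
    let B2 : Matrix (Fin 2) (Fin 2) ℝ := Matrix.of ![![b1, -(c * b1)], ![b2, -(c * b2)]]
    let lam : ℝ := (p21 / (p21 + p12)) * Real.log |δ1|
      + (p12 / (p12 + p21)) * Real.log |b1 - c * b2|
      + (p12 * p21 / (p12 + p21)) * Real.log |b1 / (b1 - c * b2)|
    -- the eigenvalues of B₂ are 0 and δ₂ (its characteristic polynomial is X² − δ₂ X)
    B2.charpoly = Polynomial.X ^ 2 - Polynomial.C δ2 * Polynomial.X ∧
    -- both regimes are individually stable ...
    |δ1| < 1 ∧ |δ2| < 1 ∧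
    -- ... yet the Lyapunov exponent of the mixture is strictly positive
    0 < lam := by
  intro δ1 b1 c b2 p12 p21 δ2 B2 lam
  have hδ1 : |δ1| = 10⁻¹ := by norm_num [δ1, abs_of_pos]
  have hδ2 : |δ2| = 10⁻¹ := by norm_num [δ2, b1, c, b2, abs_of_pos]
  have hratio : |b1 / δ2| = 10 ^ 3 := by norm_num [δ2, b1, c, b2, abs_of_pos]
  have hlam : lam = Real.log 10 / 5 := by
    change 0.8 / (0.8 + 0.8) * Real.log |δ1| + 0.8 / (0.8 + 0.8) * Real.log |δ2|
      + 0.8 * 0.8 / (0.8 + 0.8) * Real.log |b1 / δ2| = _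
    rw [hδ1, hδ2, hratio, Real.log_inv, Real.log_pow]
    ring
  refine ⟨Matrix.charpoly_rankOne_fin_two b1 b2 c, ?_, ?_, ?_⟩
  · rw [hδ1]; norm_num
  · rw [hδ2]; norm_num
  · rw [hlam]
    exact div_pos (Real.log_pos (by norm_num)) (by norm_num)
end
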